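/- For any finite nonempty subsets X, B₁, ..., B_k of an abelian group, |B₁ + ⋯ + B_k| ≤ (|X + B₁| ⋯ |X + B_k|) / |X|^(k-1). -/

import Mathlib

/-!
Index the summands by a finite group `ι` (for `k` summands, `ℤ/k`). Put `A = X^ι` and let `U` be
the union of the boxes `∏ᵢ B (i + j)`, `j ∈ ι`, all inside `G^ι`.
Summing the `|ι|` boxes shows that `|ι| • U` contains `(∑ᵢ Bᵢ)^ι`, while `|A + U|` is at most
`|ι| ∏ᵢ |X + Bᵢ|`, since every box is a permutation of the same product. The Plünnecke–Ruzsa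
inequality for `A` and the single set `U` then gives the claim up to the factor `|ι|`, which a
tensor power argument (applying this to `X^m` and `B i ^ m` in `G^m`) removes.
-/

open Finset Fintype Pointwise

lemma le_of_forall_pow_le_mul_pow {α : Type*} [Field α] [LinearOrder α] [IsStrictOrderedRing α]
    [Archimedean α] {a b C : α} (hb : 0 ≤ b) (h : ∀ m : ℕ, a ^ m ≤ C * b ^ m) : a ≤ b := by
  by_contra! hba
  obtain rfl | hb := hb.eq_or_lt
  · have h1 := h 1
    simp only [pow_one, mul_zero] at h1
    exact h1.not_gt hba
  have hratio : 1 < a / b := (one_lt_div hb).2 hba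
  obtain ⟨m, hm⟩ := ((tendsto_pow_atTop_atTop_of_one_lt hratio).eventually_gt_atTop C).exists
  have hbm : 0 < b ^ m := pow_pos hb m
  rw [div_pow, lt_div_iff₀ hbm] at hm
  exact (h m).not_gt hm

namespace Finset

lemma card_nsmul_mul_card_pow_le {G : Type*} [AddCommGroup G] [DecidableEq G] {A : Finset G}
    (hA : A.Nonempty) (B : Finset G) (n : ℕ) : #(n • B) * #A ^ n ≤ #(A + B) ^ n * #A := by
  have hPR := pluennecke_ruzsa_inequality_nsmul_add hA B n
  rw [div_pow, div_mul_eq_mul_div, le_div_iff₀ (by positivity)] at hPR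
  exact_mod_cast hPR

end Finset

namespace Fintype

variable {ι G : Type*} [Fintype ι] [DecidableEq ι] [DecidableEq G]

lemma piFinset_sum [AddCommMonoid G] {κ : Type*} (s : Finset κ) (f : κ → ι → Finset G) :
    piFinset (fun i ↦ ∑ j ∈ s, f j i) = ∑ j ∈ s, piFinset (f j) := by
  classical
  induction s using Finset.induction_on with
  | empty => ext; simp [funext_iff]
  | insert j s hj ih => simp [sum_insert hj, piFinset_add, ih]

section Shift

variable [AddGroup ι]

def shiftBox (B : ι → Finset G) (j : ι) : Finset (ι → G) :=
  piFinset fun i ↦ B (i + j)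

lemma sum_shiftBox [AddCommMonoid G] (B : ι → Finset G) :
    ∑ j, shiftBox B j = piFinset fun _ ↦ ∑ i, B i := by
  simp only [shiftBox]
  rw [← piFinset_sum]
  congr! 2 with i
  exact Fintype.sum_equiv (Equiv.addLeft i) _ _ fun _ ↦ rfl

lemma card_piFinset_const_add_shiftBox [AddCommMonoid G] (X : Finset G) (B : ι → Finset G)
    (j : ι) : #(piFinset (fun _ ↦ X) + shiftBox B j) = ∏ i, #(X + B i) := by
  rw [shiftBox, ← piFinset_add, card_piFinset]
  exact Fintype.prod_equiv (Equiv.addRight j) _ _ fun _ ↦ rfl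

variable [AddCommGroup G]

lemma card_sum_mul_card_pow_le_card_mul_prod {X : Finset G} (hX : X.Nonempty)
    (B : ι → Finset G) :
    #(∑ i, B i) * #X ^ card ι ≤ card ι * (∏ i, #(X + B i)) * #X := by
  set K := card ι
  set A : Finset (ι → G) := piFinset fun _ ↦ X
  set U : Finset (ι → G) := univ.biUnion (shiftBox B)
  have hA : #A = #X ^ K := by simp [A, K]
  have hKU : #(∑ i, B i) ^ K ≤ #(K • U) :=
    calc #(∑ i, B i) ^ K = #(∑ j, shiftBox B j) := by simp [sum_shiftBox, K]
      _ ≤ #(∑ _j : ι, U) :=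
        card_le_card (sum_le_sum fun j _ ↦ subset_biUnion_of_mem _ (mem_univ j))
      _ = #(K • U) := by rw [sum_const, card_univ]
  have hAU : #(A + U) ≤ K * ∏ i, #(X + B i) := by
    have hcover : A + U ⊆ univ.biUnion fun j ↦ A + shiftBox B j := by
      intro x hx
      obtain ⟨a, ha, b, hb, rfl⟩ := mem_add.1 hx
      obtain ⟨j, -, hbj⟩ := mem_biUnion.1 hb
      exact mem_biUnion.2 ⟨j, mem_univ j, add_mem_add ha hbj⟩
    calc #(A + U) ≤ ∑ j, #(A + shiftBox B j) := (card_le_card hcover).trans card_biUnion_le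
      _ = K * ∏ i, #(X + B i) := by simp [A, K, card_piFinset_const_add_shiftBox]
  have hPR := card_nsmul_mul_card_pow_le (piFinset_nonempty.2 fun _ ↦ hX) U K
  refine (pow_le_pow_iff_left₀ (Nat.zero_le _) (Nat.zero_le _) (card_ne_zero (α := ι))).1 ?_
  calc (#(∑ i, B i) * #X ^ K) ^ K = #(∑ i, B i) ^ K * #A ^ K := by rw [mul_pow, hA]
    _ ≤ #(K • U) * #A ^ K := by gcongr
    _ ≤ #(A + U) ^ K * #A := hPR
    _ ≤ (K * ∏ i, #(X + B i)) ^ K * #X ^ K := by rw [hA]; gcongr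
    _ = (K * (∏ i, #(X + B i)) * #X) ^ K := by ring

lemma card_sum_mul_card_pow_le_prod_mul {X : Finset G} (hX : X.Nonempty) (B : ι → Finset G) :
    #(∑ i, B i) * #X ^ card ι ≤ (∏ i, #(X + B i)) * #X := by
  suffices h : ∀ m : ℕ, (#(∑ i, B i) * #X ^ card ι) ^ m ≤ card ι * ((∏ i, #(X + B i)) * #X) ^ m by
    exact_mod_cast le_of_forall_pow_le_mul_pow (α := ℝ)
      (a := (#(∑ i, B i) * #X ^ card ι : ℕ)) (b := ((∏ i, #(X + B i)) * #X : ℕ)) (C := card ι)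
      (Nat.cast_nonneg _) fun m ↦ by exact_mod_cast h m
  intro m
  have h := card_sum_mul_card_pow_le_card_mul_prod (G := Fin m → G)
    (piFinset_nonempty.2 fun _ ↦ hX) fun i ↦ piFinset fun _ ↦ B i
  rw [← piFinset_sum univ fun i (_ : Fin m) ↦ B i] at h
  simp only [← piFinset_add, card_piFinset_const] at h
  calc (#(∑ i, B i) * #X ^ card ι) ^ m = #(∑ i, B i) ^ m * (#X ^ m) ^ card ι := by ring
    _ ≤ card ι * (∏ i, #(X + B i) ^ m) * #X ^ m := h
    _ = card ι * ((∏ i, #(X + B i)) * #X) ^ m := by rw [prod_pow]; ring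

end Shift

end Fintype

theorem plunnecke_ruzsa_corollary_general {G : Type*} [AddCommGroup G] [DecidableEq G]
    (k : ℕ) (X : Finset G) (B : Fin k → Finset G)
    (hX : X.Nonempty) :
    ((∑ i, B i).card : ℝ) ≤ (∏ i, ((X + B i).card : ℝ)) / (X.card : ℝ) ^ (k - 1) := by
  rcases k with _ | n
  · simp
  have hX₀ : (0 : ℝ) < #X := by exact_mod_cast hX.card_pos
  have key : (#(∑ i, B i) * #X ^ n : ℝ) * #X ≤ (∏ i, (#(X + B i) : ℝ)) * #X := by
    have h := card_sum_mul_card_pow_le_prod_mul hX B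
    rw [Fintype.card_fin, pow_succ, ← mul_assoc] at h
    exact_mod_cast h
  rw [Nat.add_sub_cancel, le_div_iff₀ (by positivity)]
  exact le_of_mul_le_mul_right key hX₀

theorem plunnecke_ruzsa_corollary {G : Type*} [AddCommGroup G] [DecidableEq G]
    (k : ℕ) (X : Finset G) (B : Fin k → Finset G)
    (hX : X.Nonempty) (hB : ∀ i, (B i).Nonempty) :
    ((∑ i, B i).card : ℝ) ≤ (∏ i, ((X + B i).card : ℝ)) / (X.card : ℝ) ^ (k - 1) :=
  plunnecke_ruzsa_corollary_general k X B hX
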